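/- arXiv:2201.04368 — 2 statements merged into one kernel-verified Lean document; each statement's English description precedes it below -/
import Mathlib

section
/- In the periodic 1D setting, for every index i, the sequence S_K(i)/K² converges to E[y]/2 as K → ∞. -/
open Finset

/-- The training mean `E[y] = (1/n)·Σ_{i ∈ ℤ/nℤ} y_i`. -/
noncomputable def trainMean (n : ℕ) [NeZero n] (y : ZMod n → ℝ) : ℝ :=
  (1 / (n : ℝ)) * ∑ i, y i

/-- `A_K(i) = (1/K)·Σ_{k=1}^{K−1} ((K−k)·y_{i−k} + k·y_{i+K−k})` (so `A_1(i) = 0`). -/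
noncomputable def mixA (n : ℕ) (y : ZMod n → ℝ) (i : ZMod n) (K : ℕ) : ℝ :=
  (1 / (K : ℝ)) * ∑ k ∈ Finset.Icc 1 (K - 1),
    (((K : ℝ) - (k : ℝ)) * y (i - (k : ZMod n)) + (k : ℝ) * y (i + ((K - k : ℕ) : ZMod n)))

/-- `S_1(i) = 0` and `S_{K+1}(i) = S_K(i) + A_{K+1}(i)`. -/
noncomputable def mixS (n : ℕ) (y : ZMod n → ℝ) (i : ZMod n) : ℕ → ℝ
  | 0 => 0
  | K + 1 => mixS n y i K + mixA n y i (K + 1)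

/-- The Local Mixup minimizer `f_K(i) = (2/(K·(K+3)))·(2K·y_i + S_K(i))`. -/
noncomputable def mixF (n : ℕ) (y : ZMod n → ℝ) (K : ℕ) (i : ZMod n) : ℝ :=
  (2 / ((K : ℝ) * ((K : ℝ) + 3))) * (2 * (K : ℝ) * y i + mixS n y i K)

noncomputable def gg (n : ℕ) (y : ZMod n → ℝ) (i : ZMod n) (k : ℕ) : ℝ :=
  y (i - (k : ZMod n)) + y (i + (k : ZMod n))

noncomputable def PP (n : ℕ) (y : ZMod n → ℝ) (i : ZMod n) (t : ℕ) : ℝ :=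
  ∑ j ∈ range t, gg n y i j

lemma sum_range_cast (n : ℕ) [NeZero n] (f : ZMod n → ℝ) :
    ∑ j ∈ Finset.range n, f (j : ZMod n) = ∑ x, f x := by
  refine Finset.sum_nbij' (fun j => (j : ZMod n)) (fun x => x.val) ?_ ?_ ?_ ?_ ?_
  · intros; exact Finset.mem_univ _
  · intro x _; exact Finset.mem_range.2 (ZMod.val_lt x)
  · intro j hj; exact ZMod.val_natCast_of_lt (Finset.mem_range.1 hj)
  · intro x _; exact ZMod.natCast_zmod_val x
  · intros; rfl

lemma gg_sum (n : ℕ) [NeZero n] (y : ZMod n → ℝ) (i : ZMod n) (a : ℕ) :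
    ∑ j ∈ range n, gg n y i (a + j) = 2 * ∑ x, y x := by
  have h1 : ∀ j : ℕ, gg n y i (a + j)
      = y ((i - (a:ZMod n)) - (j : ZMod n)) + y ((i + (a:ZMod n)) + (j : ZMod n)) := by
    intro j; unfold gg; push_cast; ring_nf
  simp only [h1]
  rw [Finset.sum_add_distrib,
    sum_range_cast n (fun x => y ((i - (a:ZMod n)) - x)),
    sum_range_cast n (fun x => y ((i + (a:ZMod n)) + x))]
  have e1 : ∑ x : ZMod n, y (i - (a:ZMod n) - x) = ∑ x, y x :=
    Fintype.sum_equiv (Equiv.subLeft (i - (a:ZMod n))) _ y (fun x => rfl)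
  have e2 : ∑ x : ZMod n, y (i + (a:ZMod n) + x) = ∑ x, y x :=
    Fintype.sum_equiv (Equiv.addLeft (i + (a:ZMod n))) _ y (fun x => rfl)
  rw [e1, e2]; ring

lemma PP_bound (n : ℕ) [NeZero n] (y : ZMod n → ℝ) (i : ZMod n) (t : ℕ) :
    |PP n y i t - (2 * (∑ x, y x) / n) * t|
      ≤ (∑ j ∈ range n, |gg n y i j|) + 2 * |∑ x, y x| := by
  set T : ℝ := ∑ x, y x with hT
  set B : ℝ := ∑ j ∈ range n, |gg n y i j| with hB
  have hn : (0:ℝ) < n := by exact_mod_cast Nat.pos_of_ne_zero (NeZero.ne n)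
  induction t using Nat.strong_induction_on with
  | _ t ih =>
    rcases lt_or_ge t n with h | h
    · have h1 : |PP n y i t| ≤ B := by
        refine le_trans (Finset.abs_sum_le_sum_abs _ _) ?_
        exact Finset.sum_le_sum_of_subset_of_nonneg
          (Finset.range_subset_range.2 h.le) (fun j _ _ => abs_nonneg _)
      have h2 : |(2 * T / n) * t| ≤ 2 * |T| := by
        have ht : |(t:ℝ)| ≤ (n:ℝ) := by
          rw [abs_of_nonneg (Nat.cast_nonneg t)]; exact_mod_cast h.le
        rw [abs_mul, abs_div, abs_mul, abs_of_pos hn, div_mul_eq_mul_div,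
          div_le_iff₀ hn]
        have h22 : |(2:ℝ)| = 2 := by norm_num
        rw [h22]
        exact mul_le_mul_of_nonneg_left ht (by positivity)
      calc |PP n y i t - (2 * T / n) * t| ≤ |PP n y i t| + |(2 * T / n) * t| :=
            abs_sub _ _
        _ ≤ B + 2 * |T| := add_le_add h1 h2
    · obtain ⟨s, rfl⟩ : ∃ s, t = s + n := ⟨t - n, (Nat.sub_add_cancel h).symm⟩
      have key : PP n y i (s + n) = PP n y i s + 2 * T := by
        unfold PP; rw [Finset.sum_range_add]; rw [gg_sum n y i s]
      have : PP n y i (s + n) - (2 * T / n) * ((s:ℝ) + n)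
          = PP n y i s - (2 * T / n) * s := by
        rw [key]; field_simp; ring
      push_cast
      rw [this]
      exact ih s (Nat.lt_add_of_pos_right (Nat.pos_of_ne_zero (NeZero.ne n)))

lemma mixA_eq (n : ℕ) (y : ZMod n → ℝ) (i : ZMod n) (K : ℕ) :
    mixA n y i K = (1 / (K : ℝ)) * ∑ k ∈ Icc 1 (K - 1), ((K : ℝ) - k) * gg n y i k := by
  unfold mixA gg
  congr 1
  simp only [mul_add, Finset.sum_add_distrib]
  congr 1
  refine Finset.sum_nbij' (fun k => K - k) (fun k => K - k) ?_ ?_ ?_ ?_ ?_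
  · intro k hk; simp only [Finset.mem_Icc] at *; omega
  · intro k hk; simp only [Finset.mem_Icc] at *; omega
  · intro k hk; simp only [Finset.mem_Icc] at hk; show K - (K - k) = k; omega
  · intro k hk; simp only [Finset.mem_Icc] at hk; show K - (K - k) = k; omega
  · intro k hk
    simp only [Finset.mem_Icc] at hk
    have h2 : ((K - k : ℕ) : ℝ) = (K : ℝ) - k := by
      have : k ≤ K := by omega
      push_cast [this]; ring
    rw [h2]
    ring_nf

lemma sum_weight (n : ℕ) (y : ZMod n → ℝ) (i : ZMod n) (m : ℕ) :
    ∑ j ∈ range m, ((m : ℝ) - j) * gg n y i j = ∑ t ∈ range m, PP n y i (t + 1) := by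
  induction m with
  | zero => simp
  | succ m ih =>
    rw [Finset.sum_range_succ (f := fun t => PP n y i (t + 1)), ← ih]
    have h : ∀ j ∈ range (m + 1),
        (((m + 1 : ℕ) : ℝ) - j) * gg n y i j = ((m : ℝ) - j) * gg n y i j + gg n y i j := by
      intro j _; push_cast; ring
    rw [Finset.sum_congr rfl h, Finset.sum_add_distrib,
      Finset.sum_range_succ (f := fun j => ((m : ℝ) - j) * gg n y i j)]
    simp [PP]

lemma weight_bound (n : ℕ) [NeZero n] (y : ZMod n → ℝ) (i : ZMod n) (m : ℕ) :
    |∑ j ∈ range m, ((m : ℝ) - j) * gg n y i j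
        - (2 * (∑ x, y x) / n) * ((m : ℝ) * (m + 1) / 2)|
      ≤ ((∑ j ∈ range n, |gg n y i j|) + 2 * |∑ x, y x|) * m := by
  set T : ℝ := ∑ x, y x with hT
  set M : ℝ := (∑ j ∈ range n, |gg n y i j|) + 2 * |T| with hM
  have hgauss : ∑ t ∈ range m, ((t:ℝ) + 1) = (m:ℝ) * (m + 1) / 2 := by
    induction m with
    | zero => simp
    | succ m ih => rw [Finset.sum_range_succ, ih]; push_cast; ring
  rw [sum_weight, ← hgauss, Finset.mul_sum, ← Finset.sum_sub_distrib]
  refine le_trans (Finset.abs_sum_le_sum_abs _ _) ?_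
  have hterm : ∀ t ∈ range m,
      |PP n y i (t + 1) - (2 * T / n) * ((t:ℝ) + 1)| ≤ M := by
    intro t _
    have := PP_bound n y i (t + 1)
    push_cast at this
    exact this
  calc ∑ t ∈ range m, |PP n y i (t + 1) - (2 * T / n) * ((t:ℝ) + 1)|
      ≤ ∑ _t ∈ range m, M := Finset.sum_le_sum hterm
    _ = M * m := by rw [Finset.sum_const, Finset.card_range, nsmul_eq_mul]; ring

lemma mixA_bound (n : ℕ) [NeZero n] (y : ZMod n → ℝ) (i : ZMod n) (m : ℕ) (hm : 1 ≤ m) :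
    |mixA n y i m - ((∑ x, y x) / n * ((m : ℝ) + 1) - gg n y i 0)|
      ≤ (∑ j ∈ range n, |gg n y i j|) + 2 * |∑ x, y x| := by
  set T : ℝ := ∑ x, y x with hT
  set M : ℝ := (∑ j ∈ range n, |gg n y i j|) + 2 * |T| with hM
  have hn : (0:ℝ) < n := by exact_mod_cast Nat.pos_of_ne_zero (NeZero.ne n)
  have hmr : (0:ℝ) < m := by exact_mod_cast hm
  obtain ⟨m', rfl⟩ : ∃ m', m = m' + 1 := ⟨m - 1, by omega⟩
  rw [mixA_eq]
  set F : ℕ → ℝ := fun j => (((m' + 1 : ℕ) : ℝ) - j) * gg n y i j with hF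
  have hsplit : ∑ k ∈ Icc 1 (m' + 1 - 1), F k
      = (∑ j ∈ range (m' + 1), F j) - ((m' + 1 : ℕ) : ℝ) * gg n y i 0 := by
    have h1 : ∑ j ∈ range (m' + 1), F j = (∑ j ∈ range m', F (j + 1)) + F 0 :=
      Finset.sum_range_succ' F m'
    have h2 : ∑ k ∈ Icc 1 (m' + 1 - 1), F k = ∑ j ∈ range m', F (1 + j) := by
      have : m' + 1 - 1 = m' := rfl
      rw [this, ← Finset.Ico_add_one_right_eq_Icc, Finset.sum_Ico_eq_sum_range]
      simp
    have h3 : ∀ j ∈ range m', F (1 + j) = F (j + 1) := by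
      intro j _; rw [Nat.add_comm]
    rw [h2, Finset.sum_congr rfl h3, h1]
    have hF0 : F 0 = ((m' + 1 : ℕ) : ℝ) * gg n y i 0 := by simp [hF]
    rw [hF0]; ring
  rw [hsplit]
  set m : ℕ := m' + 1
  set W : ℝ := ∑ j ∈ range m, F j with hW
  have key : (1 / (m:ℝ)) * (W - (m:ℝ) * gg n y i 0)
        - (T / n * ((m:ℝ) + 1) - gg n y i 0)
      = (1 / (m:ℝ)) * (W - (2 * T / n) * ((m:ℝ) * ((m:ℝ) + 1) / 2)) := by
    field_simp
    ring
  rw [key, abs_mul]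
  have h1m : |1 / (m:ℝ)| = 1 / (m:ℝ) := abs_of_pos (by positivity)
  rw [h1m]
  have hwb := weight_bound n y i m
  calc (1 / (m:ℝ)) * |W - (2 * T / n) * ((m:ℝ) * ((m:ℝ) + 1) / 2)|
      ≤ (1 / (m:ℝ)) * (M * m) := by
        apply mul_le_mul_of_nonneg_left _ (by positivity)
        exact hwb
    _ = M := by field_simp

lemma mixS_eq (n : ℕ) (y : ZMod n → ℝ) (i : ZMod n) (K : ℕ) :
    mixS n y i K = ∑ m ∈ range K, mixA n y i (m + 1) := by
  induction K with
  | zero => simp [mixS]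
  | succ K ih => rw [Finset.sum_range_succ, ← ih]; rfl

lemma mixS_bound (n : ℕ) [NeZero n] (y : ZMod n → ℝ) (i : ZMod n) (K : ℕ) :
    |mixS n y i K
        - ((∑ x, y x) / n * ((K:ℝ) * ((K:ℝ) + 3)) / 2 - (K:ℝ) * gg n y i 0)|
      ≤ ((∑ j ∈ range n, |gg n y i j|) + 2 * |∑ x, y x|) * K := by
  set T : ℝ := ∑ x, y x with hT
  set M : ℝ := (∑ j ∈ range n, |gg n y i j|) + 2 * |T| with hM
  rw [mixS_eq]
  have hexp : T / n * ((K:ℝ) * ((K:ℝ) + 3)) / 2 - (K:ℝ) * gg n y i 0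
      = ∑ m ∈ range K, (T / n * ((m:ℝ) + 2) - gg n y i 0) := by
    induction K with
    | zero => simp
    | succ K ih => rw [Finset.sum_range_succ, ← ih]; push_cast; ring
  rw [hexp, ← Finset.sum_sub_distrib]
  refine le_trans (Finset.abs_sum_le_sum_abs _ _) ?_
  have hterm : ∀ m ∈ range K,
      |mixA n y i (m + 1) - (T / n * ((m:ℝ) + 2) - gg n y i 0)| ≤ M := by
    intro m _
    have := mixA_bound n y i (m + 1) (by omega)
    push_cast at this ⊢
    convert this using 4; ring
  calc ∑ m ∈ range K, |mixA n y i (m + 1) - (T / n * ((m:ℝ) + 2) - gg n y i 0)|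
      ≤ ∑ _m ∈ range K, M := Finset.sum_le_sum hterm
    _ = M * K := by rw [Finset.sum_const, Finset.card_range, nsmul_eq_mul]; ring

open Filter in
/-- In the periodic 1D setting, for every index `i`,
`S_K(i)/K² → E[y]/2` as `K → ∞`. -/
theorem localMixup_S_limit (n : ℕ) [NeZero n] (y : ZMod n → ℝ) (i : ZMod n) :
    Tendsto (fun K : ℕ => mixS n y i K / (K : ℝ) ^ 2) atTop
      (nhds (trainMean n y / 2)) := by
  set T : ℝ := ∑ x, y x with hT
  set M : ℝ := (∑ j ∈ range n, |gg n y i j|) + 2 * |T| with hM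
  set g0 : ℝ := gg n y i 0 with hg0
  have hn : (0:ℝ) < n := by exact_mod_cast Nat.pos_of_ne_zero (NeZero.ne n)
  have hMnn : 0 ≤ M := by
    rw [hM]
    have : (0:ℝ) ≤ ∑ j ∈ range n, |gg n y i j| :=
      Finset.sum_nonneg fun j _ => abs_nonneg _
    positivity
  have hKlim : Tendsto (fun K : ℕ => 1 / (K:ℝ)) atTop (nhds 0) :=
    tendsto_one_div_atTop_nhds_zero_nat
  set e : ℕ → ℝ := fun K => T / n * (1/2 + (3/2) * (1/(K:ℝ))) - g0 * (1/(K:ℝ)) with he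
  have h1 : Tendsto e atTop (nhds (T / n / 2)) := by
    have h1' := (((hKlim.const_mul (3/2:ℝ)).const_add (1/2)).const_mul (T / n)).sub
      (hKlim.const_mul g0)
    have hval : T / n * (1/2 + 3/2 * 0) - g0 * 0 = T / n / 2 := by ring
    rw [hval] at h1'
    exact h1'
  have h2 : Tendsto (fun K : ℕ => mixS n y i K / (K:ℝ)^2 - e K) atTop (nhds 0) := by
    apply squeeze_zero_norm' (a := fun K : ℕ => M * (1/(K:ℝ)))
    · filter_upwards [eventually_ge_atTop 1] with K hK1
      have hKr : (0:ℝ) < K := by exact_mod_cast hK1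
      have heq : mixS n y i K / (K:ℝ)^2 - e K
          = (mixS n y i K - (T / n * ((K:ℝ) * ((K:ℝ) + 3)) / 2 - (K:ℝ) * g0)) / (K:ℝ)^2 := by
        rw [he]
        field_simp
      rw [Real.norm_eq_abs, heq, abs_div, abs_of_pos (by positivity : (0:ℝ) < (K:ℝ)^2)]
      have hb := mixS_bound n y i K
      calc |mixS n y i K - (T / n * ((K:ℝ) * ((K:ℝ) + 3)) / 2 - (K:ℝ) * g0)| / (K:ℝ)^2
          ≤ (M * K) / (K:ℝ)^2 := by gcongr
        _ = M * (1/(K:ℝ)) := by field_simp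
    · simpa using hKlim.const_mul M
  have h3 := h2.add h1
  rw [zero_add] at h3
  have h4 : Tendsto (fun K : ℕ => mixS n y i K / (K:ℝ)^2) atTop (nhds (T / n / 2)) := by
    have hfun : (fun K : ℕ => mixS n y i K / (K:ℝ)^2)
        = fun K : ℕ => (mixS n y i K / (K:ℝ)^2 - e K) + e K := by
      funext K; ring
    rw [hfun]; exact h3
  have : trainMean n y / 2 = T / n / 2 := by rw [trainMean, hT]; ring
  rw [this]
  exact h4
end

section
/- In the periodic 1D setting, the training variance of the Local Mixup minimizer, Var(f_K) = (1/n)·Σ_{i ∈ ℤ/nℤ} (f_K(i) − (1/n)·Σ_{j ∈ ℤ/nℤ} f_K(j))², converges to 0 as K → ∞. -/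
/-- Training variance `Var(f) = (1/n)·Σ_i (f(i) − (1/n)·Σ_j f(j))²`. -/
noncomputable def trainVar (n : ℕ) [NeZero n] (f : ZMod n → ℝ) : ℝ :=
  (1 / (n : ℝ)) * ∑ i, (f i - (1 / (n : ℝ)) * ∑ j, f j) ^ 2

open Finset Filter Topology

namespace ZMod

variable {n : ℕ} [NeZero n]

theorem sum_range_natCast {M : Type*} [AddCommMonoid M] (h : ZMod n → M) :
    ∑ k ∈ range n, h k = ∑ x, h x :=
  sum_bij' (fun k _ => (k : ZMod n)) (fun x _ => x.val) (fun _ _ => mem_univ _)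
    (fun x _ => mem_range.2 x.val_lt) (fun _ hk => val_cast_of_lt (mem_range.1 hk))
    (fun x _ => natCast_zmod_val x) (fun _ _ => rfl)

theorem periodic_sum_range {M : Type*} [AddCommMonoid M] {g : ZMod n → M} (hg : ∑ x, g x = 0) :
    Function.Periodic (fun m => ∑ k ∈ range m, g k) n := by
  intro m
  have hshift : ∑ k ∈ range n, g ((m : ZMod n) + k) = 0 := by
    rw [sum_range_natCast (fun x => g ((m : ZMod n) + x))]
    exact (Equiv.sum_comp (Equiv.addLeft _) g).trans hg
  simp only [sum_range_add, Nat.cast_add, hshift, add_zero]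

theorem abs_sum_range_le {g : ZMod n → ℝ} (hg : ∑ x, g x = 0) (m : ℕ) :
    |∑ k ∈ range m, g k| ≤ ∑ x, |g x| := by
  rw [← (periodic_sum_range hg).map_mod_nat m, ← sum_range_natCast]
  exact (abs_sum_le_sum_abs _ _).trans <| sum_le_sum_of_subset_of_nonneg
    (range_subset_range.2 (Nat.mod_lt m (NeZero.pos n)).le) fun _ _ _ => abs_nonneg _

theorem abs_sum_Icc_le {g : ZMod n → ℝ} (hg : ∑ x, g x = 0) (a b : ℕ) :
    |∑ k ∈ Icc a b, g k| ≤ ∑ x, |g x| := by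
  have hshift (f : ZMod n → ℝ) : ∑ x, f (a + x) = ∑ x, f x :=
    Equiv.sum_comp (Equiv.addLeft (a : ZMod n)) f
  rw [← Ico_add_one_right_eq_Icc, sum_Ico_eq_sum_range]
  push_cast
  have := abs_sum_range_le (g := fun x => g ((a : ZMod n) + x)) (by rwa [hshift]) (b + 1 - a)
  rwa [hshift fun x => |g x|] at this

theorem abs_sum_Icc_mul_le {g : ZMod n → ℝ} (hg : ∑ x, g x = 0) (m : ℕ) :
    |∑ k ∈ Icc 1 m, ((m : ℝ) + 1 - k) * g k| ≤ m * ∑ x, |g x| := by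
  induction m with
  | zero => simp
  | succ m ih =>
    have hsplit : ∑ k ∈ Icc 1 (m + 1), (((m + 1 : ℕ) : ℝ) + 1 - k) * g k =
        ∑ k ∈ Icc 1 m, ((m : ℝ) + 1 - k) * g k + ∑ k ∈ Icc 1 (m + 1), g k := by
      rw [sum_Icc_succ_top (by omega), sum_Icc_succ_top (by omega)]
      push_cast
      have hweight (k : ℕ) : ((m : ℝ) + 1 + 1 - k) * g k = ((m : ℝ) + 1 - k) * g k + g k := by
        ring
      simp only [hweight, sum_add_distrib]
      ring
    rw [hsplit]
    push_cast
    linarith [abs_add_le (∑ k ∈ Icc 1 m, ((m : ℝ) + 1 - k) * g k) (∑ k ∈ Icc 1 (m + 1), g k),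
      abs_sum_Icc_le hg 1 (m + 1)]

end ZMod

section LocalMixup

variable {n : ℕ} (y : ZMod n → ℝ) (i : ZMod n)

theorem mixA_succ (m : ℕ) :
    mixA n y i (m + 1) = (1 / ((m : ℝ) + 1)) *
      (∑ k ∈ Icc 1 m, ((m : ℝ) + 1 - k) * y (i - k) +
        ∑ k ∈ Icc 1 m, ((m : ℝ) + 1 - k) * y (i + k)) := by
  have hreflect : ∑ k ∈ Icc 1 m, (k : ℝ) * y (i + ((m + 1 - k : ℕ) : ZMod n)) =
      ∑ k ∈ Icc 1 m, ((m : ℝ) + 1 - k) * y (i + k) := by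
    refine sum_nbij' (fun k => m + 1 - k) (fun k => m + 1 - k) ?_ ?_ ?_ ?_ ?_ <;>
      intro k hk <;> simp only [mem_Icc] at hk ⊢
    any_goals omega
    rw [Nat.cast_sub (R := ℝ) (by omega)]
    push_cast
    ring
  rw [mixA, Nat.add_sub_cancel, sum_add_distrib, hreflect]
  push_cast
  rfl

theorem mixA_add_const (c : ℝ) (m : ℕ) :
    mixA n (fun j => y j + c) i (m + 1) = mixA n y i (m + 1) + m * c := by
  have hsummand (k : ℕ) (a b : ZMod n) :
      (((m + 1 : ℕ) : ℝ) - k) * (y a + c) + k * (y b + c) =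
        ((((m + 1 : ℕ) : ℝ) - k) * y a + k * y b) + ((m + 1 : ℕ) : ℝ) * c := by
    ring
  simp only [mixA, hsummand, sum_add_distrib, sum_const, Nat.card_Icc, nsmul_eq_mul]
  field_simp
  push_cast
  ring

theorem mixS_add_const (c : ℝ) (K : ℕ) :
    mixS n (fun j => y j + c) i K = mixS n y i K + K * (K - 1) / 2 * c := by
  induction K with
  | zero => simp [mixS]
  | succ K ih =>
    rw [mixS, mixS, ih, mixA_add_const]
    push_cast
    ring

theorem mixF_add_const (c : ℝ) {K : ℕ} (hK : K ≠ 0) :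
    mixF n (fun j => y j + c) K i = mixF n y K i + c := by
  have hK : (K : ℝ) ≠ 0 := Nat.cast_ne_zero.2 hK
  rw [mixF, mixF, mixS_add_const]
  field_simp
  ring

theorem abs_mixA_le [NeZero n] (hy : ∑ x, y x = 0) (K : ℕ) :
    |mixA n y i K| ≤ 2 * ∑ x, |y x| := by
  have hC : 0 ≤ ∑ x, |y x| := sum_nonneg fun x _ => abs_nonneg (y x)
  rcases K with _ | m
  · simpa [mixA] using hC
  have hbound (g : ZMod n → ZMod n) (hg : ∀ f : ZMod n → ℝ, ∑ x, f (g x) = ∑ x, f x) :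
      |∑ k ∈ Icc 1 m, ((m : ℝ) + 1 - k) * y (g k)| ≤ m * ∑ x, |y x| := by
    simpa only [hg fun x => |y x|] using
      ZMod.abs_sum_Icc_mul_le (g := fun x => y (g x)) (by rw [hg, hy]) m
  have hsub := hbound (i - ·) fun f => Equiv.sum_comp (Equiv.subLeft i) f
  have hadd := hbound (i + ·) fun f => Equiv.sum_comp (Equiv.addLeft i) f
  rw [mixA_succ, abs_mul, abs_of_pos (by positivity), one_div_mul_eq_div,
    div_le_iff₀ (by positivity)]
  nlinarith [abs_add_le (∑ k ∈ Icc 1 m, ((m : ℝ) + 1 - k) * y (i - k))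
    (∑ k ∈ Icc 1 m, ((m : ℝ) + 1 - k) * y (i + k))]

theorem abs_mixS_le [NeZero n] (hy : ∑ x, y x = 0) (K : ℕ) :
    |mixS n y i K| ≤ 2 * (∑ x, |y x|) * K := by
  induction K with
  | zero => simp [mixS]
  | succ K ih =>
    rw [mixS]
    push_cast
    linarith [abs_add_le (mixS n y i K) (mixA n y i (K + 1)), abs_mixA_le y i hy (K + 1)]

theorem abs_mixF_le [NeZero n] (hy : ∑ x, y x = 0) (K : ℕ) :
    |mixF n y K i| ≤ 8 * (∑ x, |y x|) / K := by
  rcases K.eq_zero_or_pos with rfl | hK0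
  · simp [mixF]
  have hK : (0 : ℝ) < K := Nat.cast_pos.2 hK0
  have hyi : |y i| ≤ ∑ x, |y x| := single_le_sum (fun x _ => abs_nonneg (y x)) (mem_univ i)
  have hsum : |2 * (K : ℝ) * y i + mixS n y i K| ≤ 4 * (∑ x, |y x|) * K := by
    have h2Kyi : |2 * (K : ℝ) * y i| = 2 * K * |y i| := by
      rw [abs_mul, abs_of_pos (by positivity)]
    nlinarith [abs_add_le (2 * (K : ℝ) * y i) (mixS n y i K), abs_mixS_le y i hy K]
  rw [mixF, abs_mul, abs_of_pos (by positivity)]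
  calc 2 / (K * (K + 3)) * |2 * (K : ℝ) * y i + mixS n y i K|
      ≤ 2 / (K * (K + 3)) * (4 * (∑ x, |y x|) * K) := by gcongr
    _ ≤ 8 * (∑ x, |y x|) / K := by
      rw [div_mul_eq_mul_div, div_le_div_iff₀ (by positivity) hK]
      have hC : 0 ≤ ∑ x, |y x| := sum_nonneg fun x _ => abs_nonneg (y x)
      nlinarith [mul_nonneg hC hK.le]

theorem tendsto_mixF_of_sum_eq_zero [NeZero n] (hy : ∑ x, y x = 0) :
    Tendsto (fun K => mixF n y K i) atTop (𝓝 0) :=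
  squeeze_zero_norm (fun K => abs_mixF_le y i hy K) (tendsto_const_div_atTop_nhds_zero_nat _)

theorem sum_sub_trainMean [NeZero n] : ∑ x, (y x - trainMean n y) = 0 := by
  have hn : (n : ℝ) ≠ 0 := Nat.cast_ne_zero.2 (NeZero.ne n)
  rw [sum_sub_distrib, sum_const, card_univ, ZMod.card, nsmul_eq_mul, trainMean]
  field_simp
  ring

theorem tendsto_mixF_trainMean [NeZero n] :
    Tendsto (fun K => mixF n y K i) atTop (𝓝 (trainMean n y)) := by
  have hcentered :=
    (tendsto_mixF_of_sum_eq_zero _ i (sum_sub_trainMean y)).add_const (trainMean n y)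
  rw [zero_add] at hcentered
  refine hcentered.congr' ?_
  filter_upwards [eventually_ne_atTop 0] with K hK
  simpa using (mixF_add_const (fun x => y x - trainMean n y) i (trainMean n y) hK).symm

end LocalMixup

theorem continuous_trainVar (n : ℕ) [NeZero n] : Continuous (trainVar n) := by
  unfold trainVar
  fun_prop

theorem trainVar_const (n : ℕ) [NeZero n] (c : ℝ) : trainVar n (fun _ => c) = 0 := by
  have hn : (n : ℝ) ≠ 0 := Nat.cast_ne_zero.2 (NeZero.ne n)
  simp [trainVar, hn]

open Filter in
/-- In the periodic 1D setting, the training variance of the Local Mixup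
minimizer converges to `0` as `K → ∞`. -/
theorem localMixup_variance_limit (n : ℕ) [NeZero n] (y : ZMod n → ℝ) :
    Tendsto (fun K : ℕ => trainVar n (mixF n y K)) atTop (nhds 0) := by
  have hlim : Tendsto (fun K => mixF n y K) atTop (𝓝 fun _ => trainMean n y) :=
    tendsto_pi_nhds.2 fun i => tendsto_mixF_trainMean y i
  simpa only [trainVar_const, Function.comp_def] using
    ((continuous_trainVar n).tendsto _).comp hlim
end
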